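/- arXiv:1905.08737 — 6 statements merged into one kernel-verified Lean document; each statement's English description precedes it below -/
import Mathlib

section
/- Let f_θ be a likelihood with prior π, and for a subset S ⊆ {1,…,n} let p(y_S) = ∫ Π_{i∈S} f_θ(y_i) dπ(θ) > 0. Define the leave-p-out cross-validation score S_CV(y_{1:n}; p) = (1/C(n,p)) Σ over all p-element test sets T of (1/p) Σ_{j∈T} s(y_j | y_{Tc}), with score s(y_j | y_{Tc}) = log( p(y_{{j}∪Tc}) / p(y_{Tc}) ), where Tc is the complement training set of T. Then log p(y_{1:n}) = Σ_{p=1}^n S_CV(y_{1:n}; p). -/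
open MeasureTheory Finset

/-- Telescoping sum helper. -/
lemma stmt4_telescope (h : ℕ → ℝ) (n : ℕ) :
    ∑ p ∈ Finset.Icc 1 n, (h (n - p + 1) - h (n - p)) = h n - h 0 := by
  have : ∑ p ∈ Finset.Icc 1 n, (h (n - p + 1) - h (n - p))
      = ∑ i ∈ Finset.range n, ((fun i => h (n - i)) i - (fun i => h (n - i)) (i + 1)) := by
    rw [← Finset.Ico_add_one_right_eq_Icc, Finset.sum_Ico_eq_sum_range]
    simp only [Nat.add_sub_cancel]
    refine Finset.sum_congr rfl fun i hi => ?_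
    simp only [Finset.mem_range] at hi
    congr 2 <;> omega
  rw [this, Finset.sum_range_sub' (fun i => h (n - i))]
  simp

/-- Proposition 2 of Fong & Holmes: the log marginal likelihood equals the sum over
`p = 1,…,n` of the leave-`p`-out cross-validation scores with the log posterior
predictive scoring rule, where `p(y_S) = ∫ ∏_{i∈S} f_θ(y_i) dπ(θ)`. -/
theorem stmt4 {Θ Y : Type*} [MeasurableSpace Θ] (π : Measure Θ) [IsProbabilityMeasure π]
    (n : ℕ) (f : Θ → Y → ℝ) (y : Fin n → Y)
    (hint : ∀ S : Finset (Fin n), Integrable (fun θ => ∏ i ∈ S, f θ (y i)) π)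
    (hpos : ∀ S : Finset (Fin n), 0 < ∫ θ, ∏ i ∈ S, f θ (y i) ∂π) :
    Real.log (∫ θ, ∏ i ∈ (Finset.univ : Finset (Fin n)), f θ (y i) ∂π) =
    ∑ p ∈ Finset.Icc 1 n, ((n.choose p : ℝ))⁻¹ *
      ∑ T ∈ (Finset.univ : Finset (Fin n)).powersetCard p, (p : ℝ)⁻¹ *
        ∑ j ∈ T, Real.log ((∫ θ, ∏ i ∈ insert j Tᶜ, f θ (y i) ∂π) /
          (∫ θ, ∏ i ∈ Tᶜ, f θ (y i) ∂π)) := by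
  classical
  set g : Finset (Fin n) → ℝ := fun S => Real.log (∫ θ, ∏ i ∈ S, f θ (y i) ∂π) with hg
  have hne : ∀ S : Finset (Fin n), (∫ θ, ∏ i ∈ S, f θ (y i) ∂π) ≠ 0 := fun S => (hpos S).ne'
  set A : ℕ → ℝ :=
    fun k => ((n.choose k : ℝ))⁻¹ * ∑ S ∈ (Finset.univ : Finset (Fin n)).powersetCard k, g S
    with hA
  have hterm : ∀ p ∈ Finset.Icc 1 n,
      ((n.choose p : ℝ))⁻¹ *
        ∑ T ∈ (Finset.univ : Finset (Fin n)).powersetCard p, (p : ℝ)⁻¹ *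
          ∑ j ∈ T, Real.log ((∫ θ, ∏ i ∈ insert j Tᶜ, f θ (y i) ∂π) /
            (∫ θ, ∏ i ∈ Tᶜ, f θ (y i) ∂π))
      = A (n - p + 1) - A (n - p) := by
    intro p hp
    rw [Finset.mem_Icc] at hp
    obtain ⟨hp1, hp2⟩ := hp
    have hcardT : ∀ T ∈ (Finset.univ : Finset (Fin n)).powersetCard p, T.card = p := by
      intro T hT
      exact (Finset.mem_powersetCard.mp hT).2
    -- rewrite logs
    have hstep : ∀ T ∈ (Finset.univ : Finset (Fin n)).powersetCard p,
        (p : ℝ)⁻¹ * ∑ j ∈ T, Real.log ((∫ θ, ∏ i ∈ insert j Tᶜ, f θ (y i) ∂π) /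
            (∫ θ, ∏ i ∈ Tᶜ, f θ (y i) ∂π))
        = (p : ℝ)⁻¹ * ∑ j ∈ T, (g (insert j Tᶜ) - g Tᶜ) := by
      intro T hT
      congr 1
      refine Finset.sum_congr rfl fun j hj => ?_
      exact Real.log_div (hne _) (hne _)
    rw [Finset.sum_congr rfl hstep, ← Finset.mul_sum]
    have hsplit :
        (∑ T ∈ (Finset.univ : Finset (Fin n)).powersetCard p,
            ∑ j ∈ T, (g (insert j Tᶜ) - g Tᶜ))
        = (∑ T ∈ (Finset.univ : Finset (Fin n)).powersetCard p, ∑ j ∈ T, g (insert j Tᶜ))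
          - (∑ T ∈ (Finset.univ : Finset (Fin n)).powersetCard p, ∑ j ∈ T, g Tᶜ) := by
      rw [← Finset.sum_sub_distrib]
      exact Finset.sum_congr rfl fun T hT => Finset.sum_sub_distrib _ _
    rw [hsplit]
    -- first double sum: reindex (T,j) ↦ (insert j Tᶜ, j)
    have hbij :
        (∑ T ∈ (Finset.univ : Finset (Fin n)).powersetCard p, ∑ j ∈ T, g (insert j Tᶜ))
        = ∑ B ∈ (Finset.univ : Finset (Fin n)).powersetCard (n - p + 1), ∑ j ∈ B, g B := by
      rw [Finset.sum_sigma', Finset.sum_sigma']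
      refine Finset.sum_nbij' (fun x => ⟨insert x.2 x.1ᶜ, x.2⟩)
        (fun x => ⟨(x.1.erase x.2)ᶜ, x.2⟩) ?_ ?_ ?_ ?_ ?_
      · rintro ⟨T, j⟩ hx
        simp only [Finset.mem_sigma, Finset.mem_powersetCard_univ] at hx ⊢
        obtain ⟨hT, hj⟩ := hx
        have hjc : j ∉ Tᶜ := by simp [hj]
        refine ⟨?_, Finset.mem_insert_self _ _⟩
        rw [Finset.card_insert_of_notMem hjc, Finset.card_compl, hT]
        simp
      · rintro ⟨B, j⟩ hx
        simp only [Finset.mem_sigma, Finset.mem_powersetCard_univ] at hx ⊢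
        obtain ⟨hB, hj⟩ := hx
        constructor
        · rw [Finset.card_compl, Finset.card_erase_of_mem hj, hB]
          simp only [Fintype.card_fin]
          omega
        · simp [Finset.mem_compl, Finset.mem_erase]
      · rintro ⟨T, j⟩ hx
        simp only [Finset.mem_sigma, Finset.mem_powersetCard_univ] at hx
        obtain ⟨hT, hj⟩ := hx
        have hjc : j ∉ Tᶜ := by simp [hj]
        simp only [Sigma.mk.inj_iff, heq_eq_eq]
        constructor
        · rw [Finset.erase_insert hjc, compl_compl]
        · trivial
      · rintro ⟨B, j⟩ hx
        simp only [Finset.mem_sigma, Finset.mem_powersetCard_univ] at hx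
        obtain ⟨hB, hj⟩ := hx
        simp only [Sigma.mk.inj_iff, heq_eq_eq]
        constructor
        · rw [compl_compl, Finset.insert_erase hj]
        · trivial
      · rintro ⟨T, j⟩ hx
        simp only [Finset.mem_sigma, Finset.mem_powersetCard_univ] at hx
        rfl
    rw [hbij]
    -- inner constant sum
    have hconst :
        (∑ B ∈ (Finset.univ : Finset (Fin n)).powersetCard (n - p + 1), ∑ j ∈ B, g B)
        = ((n - p + 1 : ℕ) : ℝ) *
          ∑ B ∈ (Finset.univ : Finset (Fin n)).powersetCard (n - p + 1), g B := by
      rw [Finset.mul_sum]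
      refine Finset.sum_congr rfl fun B hB => ?_
      rw [Finset.sum_const, (Finset.mem_powersetCard_univ.mp hB), nsmul_eq_mul]
    rw [hconst]
    -- second double sum
    have hconst2 :
        (∑ T ∈ (Finset.univ : Finset (Fin n)).powersetCard p, ∑ j ∈ T, g Tᶜ)
        = (p : ℝ) * ∑ B ∈ (Finset.univ : Finset (Fin n)).powersetCard (n - p), g B := by
      have h1 : ∀ T ∈ (Finset.univ : Finset (Fin n)).powersetCard p,
          (∑ j ∈ T, g Tᶜ) = (p : ℝ) * g Tᶜ := by
        intro T hT
        rw [Finset.sum_const, hcardT T hT, nsmul_eq_mul]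
      rw [Finset.sum_congr rfl h1, ← Finset.mul_sum]
      congr 1
      refine Finset.sum_nbij' (fun T => Tᶜ) (fun B => Bᶜ) ?_ ?_ ?_ ?_ ?_
      · intro T hT
        rw [Finset.mem_powersetCard_univ] at hT ⊢
        rw [Finset.card_compl, hT, Fintype.card_fin]
      · intro B hB
        rw [Finset.mem_powersetCard_univ] at hB ⊢
        rw [Finset.card_compl, hB, Fintype.card_fin]
        omega
      · intro T _; exact compl_compl T
      · intro B _; exact compl_compl B
      · intro T _; rfl
    rw [hconst2]
    -- arithmetic with binomial coefficients
    have hchoose_p : (n.choose p : ℝ) ≠ 0 := by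
      exact_mod_cast (Nat.choose_pos hp2).ne'
    have hpne : (p : ℝ) ≠ 0 := by exact_mod_cast Nat.pos_of_ne_zero (by omega) |>.ne'
    have hsymm1 : n.choose (n - p + 1) = n.choose (p - 1) := by
      have : n - p + 1 = n - (p - 1) := by omega
      rw [this, Nat.choose_symm (by omega)]
    have hsymm2 : n.choose (n - p) = n.choose p := Nat.choose_symm hp2
    have hkey : n.choose p * p = n.choose (p - 1) * (n - p + 1) := by
      have := Nat.choose_succ_right_eq n (p - 1)
      have h1 : p - 1 + 1 = p := by omega
      have h2 : n - (p - 1) = n - p + 1 := by omega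
      rw [h1, h2] at this
      exact this
    have hchoose_p1 : (n.choose (p - 1) : ℝ) ≠ 0 := by
      exact_mod_cast (Nat.choose_pos (by omega : p - 1 ≤ n)).ne'
    simp only [hA]
    simp only [hsymm1, hsymm2]
    have hkeyR : (n.choose p : ℝ) * p = (n.choose (p - 1) : ℝ) * ((n - p + 1 : ℕ) : ℝ) := by
      exact_mod_cast hkey
    have hmne : ((n - p + 1 : ℕ) : ℝ) ≠ 0 := by
      have : (0 : ℕ) < n - p + 1 := by omega
      exact_mod_cast this.ne'
    have e1 : ((n.choose p : ℝ))⁻¹ * (p : ℝ)⁻¹ * ((n - p + 1 : ℕ) : ℝ)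
        = ((n.choose (p - 1) : ℝ))⁻¹ := by
      obtain ⟨m', hm'⟩ : ∃ m' : ℝ, ((n - p + 1 : ℕ) : ℝ) = m' := ⟨_, rfl⟩
      rw [hm'] at hkeyR hmne ⊢
      field_simp
      linear_combination -hkeyR
    have gen : ∀ S1 S2 : ℝ,
        ((n.choose p : ℝ))⁻¹ * ((p : ℝ)⁻¹ * (((n - p + 1 : ℕ) : ℝ) * S1 - (p : ℝ) * S2))
        = ((n.choose (p - 1) : ℝ))⁻¹ * S1 - ((n.choose p : ℝ))⁻¹ * S2 := by
      intro S1 S2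
      calc ((n.choose p : ℝ))⁻¹ * ((p : ℝ)⁻¹ * (((n - p + 1 : ℕ) : ℝ) * S1 - (p : ℝ) * S2))
          = (((n.choose p : ℝ))⁻¹ * (p : ℝ)⁻¹ * ((n - p + 1 : ℕ) : ℝ)) * S1
            - ((p : ℝ)⁻¹ * (p : ℝ)) * (((n.choose p : ℝ))⁻¹ * S2) := by ring
        _ = ((n.choose (p - 1) : ℝ))⁻¹ * S1 - ((n.choose p : ℝ))⁻¹ * S2 := by
            rw [e1, inv_mul_cancel₀ hpne, one_mul]
    exact gen _ _
  rw [Finset.sum_congr rfl hterm, stmt4_telescope A n]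
  have hAn : A n = g Finset.univ := by
    simp only [hA]
    have : (Finset.univ : Finset (Fin n)).powersetCard n = {Finset.univ} := by
      have := Finset.powersetCard_self (Finset.univ : Finset (Fin n))
      rwa [Finset.card_univ, Fintype.card_fin] at this
    rw [this]
    simp
  have hA0 : A 0 = 0 := by
    simp only [hA]
    simp only [Nat.choose_zero_right, Nat.cast_one, inv_one, one_mul,
      Finset.powersetCard_zero, Finset.sum_singleton]
    rw [hg]
    simp
  rw [hAn, hA0, sub_zero, hg]
end

section
/- Fix n and 1 ≤ P ≤ n−1, and let p(y_S) > 0 for subsets S of {1,…,n} be an exchangeable joint probability (depending only on the multiset of values). Define S_PCV(y_{1:n}; P) = Σ_{p=P+1}^n S_CV(y_{1:n}; p), where S_CV(y_{1:n}; p) = (1/C(n,p)) Σ_{|T|=p} (1/p) Σ_{j∈T} log( p(y_{(T∖{j})^c ∪ {j}}) / p(y_{T^c}) ). Then S_PCV(y_{1:n}; P) = (1/C(n,P)) Σ_{|T|=P} log p(y_{T^c}), the average log marginal likelihood over all training sets of size n−P. -/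
open Finset

/-!
Write `F T = log m(Tᶜ)` and `A p` for the average of `F` over the `p`-subsets `T`; then
`log (m(insert j Tᶜ) / m(Tᶜ)) = F (T \ {j}) - F T`. Pairs `(T, j)` with `j ∈ T`, `|T| = p`
correspond to pairs `(S, j)` with `j ∉ S`, `|S| = p - 1`, so by double counting and
`C(n, p) · p = C(n, p - 1) · (n - p + 1)` the `p`-th cross-validation score is `A (p - 1) - A p`.
The sum over `p` telescopes to `A P - A n`, and `A n = log m(∅) = 0`.
-/

section DoubleCounting

variable {α M : Type*} [DecidableEq α] [AddCommMonoid M]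

theorem sum_powersetCard_succ_sum_erase (s : Finset α) (q : ℕ) (g : Finset α → α → M) :
    ∑ T ∈ s.powersetCard (q + 1), ∑ j ∈ T, g (T.erase j) j =
      ∑ S ∈ s.powersetCard q, ∑ j ∈ s \ S, g S j := by
  rw [sum_sigma', sum_sigma']
  refine sum_nbij' (fun x ↦ ⟨x.1.erase x.2, x.2⟩) (fun x ↦ ⟨insert x.2 x.1, x.2⟩)
    ?_ ?_ ?_ ?_ fun _ _ ↦ rfl
  · rintro ⟨T, j⟩ h
    simp only [mem_sigma, mem_powersetCard, mem_sdiff] at h ⊢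
    obtain ⟨⟨hTs, hT⟩, hj⟩ := h
    refine ⟨⟨(erase_subset j T).trans hTs, by rw [card_erase_of_mem hj, hT]; rfl⟩, ?_⟩
    exact ⟨hTs hj, notMem_erase j T⟩
  · rintro ⟨S, j⟩ h
    simp only [mem_sigma, mem_powersetCard, mem_sdiff] at h ⊢
    obtain ⟨⟨hSs, hS⟩, hjs, hj⟩ := h
    exact ⟨⟨insert_subset hjs hSs, by rw [card_insert_of_notMem hj, hS]⟩, mem_insert_self j S⟩
  · rintro ⟨T, j⟩ h
    rw [mem_sigma] at h
    simp [insert_erase h.2]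
  · rintro ⟨S, j⟩ h
    rw [mem_sigma, mem_sdiff] at h
    simp [erase_insert h.2.2]

theorem sum_powersetCard_succ_sum_erase_eq_nsmul (s : Finset α) (q : ℕ) (g : Finset α → M) :
    ∑ T ∈ s.powersetCard (q + 1), ∑ j ∈ T, g (T.erase j) =
      (#s - q) • ∑ S ∈ s.powersetCard q, g S := by
  rw [sum_powersetCard_succ_sum_erase s q fun S _ ↦ g S, smul_sum]
  refine sum_congr rfl fun S hS ↦ ?_
  obtain ⟨hSs, rfl⟩ := mem_powersetCard.1 hS
  rw [sum_const, card_sdiff_of_subset hSs]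

end DoubleCounting

section SubsetAverage

variable {α : Type*} [Fintype α]

noncomputable def subsetAverage (g : Finset α → ℝ) (p : ℕ) : ℝ :=
  ((Fintype.card α).choose p : ℝ)⁻¹ * ∑ T ∈ univ.powersetCard p, g T

theorem subsetAverage_card (g : Finset α → ℝ) :
    subsetAverage g (Fintype.card α) = g univ := by
  simp [subsetAverage, ← card_univ, powersetCard_self]

theorem subsetAverage_sub_subsetAverage_succ [DecidableEq α] (g : Finset α → ℝ) {q : ℕ}
    (hq : q < Fintype.card α) :
    subsetAverage g q - subsetAverage g (q + 1) =
      ((Fintype.card α).choose (q + 1) : ℝ)⁻¹ * ∑ T ∈ univ.powersetCard (q + 1),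
        ((q + 1 : ℕ) : ℝ)⁻¹ * ∑ j ∈ T, (g (T.erase j) - g T) := by
  have hsum : ∑ T ∈ univ.powersetCard (q + 1), ∑ j ∈ T, (g (T.erase j) - g T) =
      ((Fintype.card α - q : ℕ) : ℝ) * ∑ S ∈ univ.powersetCard q, g S -
        ((q + 1 : ℕ) : ℝ) * ∑ T ∈ univ.powersetCard (q + 1), g T := by
    simp_rw [sum_sub_distrib, sum_powersetCard_succ_sum_erase_eq_nsmul, card_univ, nsmul_eq_mul,
      mul_sum]
    congr 1
    refine sum_congr rfl fun T hT ↦ ?_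
    rw [sum_const, (mem_powersetCard.1 hT).2, nsmul_eq_mul]
  have hchoose : (((Fintype.card α).choose (q + 1) : ℕ) : ℝ) * ((q + 1 : ℕ) : ℝ) =
      ((Fintype.card α).choose q : ℝ) * ((Fintype.card α - q : ℕ) : ℝ) := by
    exact_mod_cast Nat.choose_succ_right_eq _ q
  have h0 : ((Fintype.card α).choose q : ℝ) ≠ 0 := by exact_mod_cast (Nat.choose_pos hq.le).ne'
  have h1 : ((Fintype.card α).choose (q + 1) : ℝ) ≠ 0 := by exact_mod_cast (Nat.choose_pos hq).ne'
  have hq1 : ((q + 1 : ℕ) : ℝ) ≠ 0 := by positivity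
  rw [← mul_sum, hsum, subsetAverage, subsetAverage]
  field_simp
  linear_combination (∑ S ∈ univ.powersetCard q, g S) * hchoose

end SubsetAverage

theorem sum_Icc_succ_eq_sub_of_eq_sub_succ {M : Type*} [AddCommGroup M] {f g : ℕ → M} {a b : ℕ}
    (hab : a ≤ b) (h : ∀ q ∈ Ico a b, f (q + 1) = g q - g (q + 1)) :
    ∑ p ∈ Icc (a + 1) b, f p = g a - g b := by
  rw [← Ico_add_one_right_eq_Icc, ← sum_Ico_add', sum_congr rfl h, ← neg_sub, ← sum_Ico_sub g hab,
    ← sum_neg_distrib]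
  simp only [neg_sub]

theorem stmt5_general (n : ℕ)
    (m : Finset (Fin n) → ℝ)
    (hpos : ∀ S, 0 < m S)
    (hempty : m ∅ = 1)
    (P : ℕ) (hP2 : P ≤ n - 1) :
    ∑ p ∈ Finset.Icc (P + 1) n, ((n.choose p : ℝ))⁻¹ *
      ∑ T ∈ (Finset.univ : Finset (Fin n)).powersetCard p, (p : ℝ)⁻¹ *
        ∑ j ∈ T, Real.log (m (insert j Tᶜ) / m Tᶜ) =
    ((n.choose P : ℝ))⁻¹ *
      ∑ T ∈ (Finset.univ : Finset (Fin n)).powersetCard P, Real.log (m Tᶜ) := by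
  have hlog (T : Finset (Fin n)) (j : Fin n) :
      Real.log (m (insert j Tᶜ) / m Tᶜ) = Real.log (m (T.erase j)ᶜ) - Real.log (m Tᶜ) := by
    rw [Real.log_div (hpos _).ne' (hpos _).ne', compl_erase]
  simp_rw [hlog]
  have hcard : Fintype.card (Fin n) = n := Fintype.card_fin n
  rw [sum_Icc_succ_eq_sub_of_eq_sub_succ (g := subsetAverage fun T ↦ Real.log (m Tᶜ))
    (by omega) fun q hq ↦ ?_]
  · have htop := subsetAverage_card fun T : Finset (Fin n) ↦ Real.log (m Tᶜ)
    rw [hcard] at htop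
    rw [htop, compl_univ, hempty, Real.log_one, sub_zero, subsetAverage, hcard]
  · rw [subsetAverage_sub_subsetAverage_succ _ (by simpa using (mem_Ico.1 hq).2), hcard]

/-- Proposition 3 (Supplementary) of Fong & Holmes: for an exchangeable positive joint
probability `m` on subsets of the observations (depending only on the multiset of
values, with `m ∅ = 1`), the preparatory cross-validation score
`S_PCV(y_{1:n}; P) = Σ_{p=P+1}^n S_CV(y_{1:n}; p)` equals the average log marginal
likelihood over all `C(n,P)` training sets of size `n − P`. -/
theorem stmt5 {Y : Type*} (n : ℕ) (y : Fin n → Y)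
    (m : Finset (Fin n) → ℝ)
    (hpos : ∀ S, 0 < m S)
    (hempty : m ∅ = 1)
    (hexch : ∀ S S' : Finset (Fin n), S.val.map y = S'.val.map y → m S = m S')
    (P : ℕ) (hP1 : 1 ≤ P) (hP2 : P ≤ n - 1) :
    ∑ p ∈ Finset.Icc (P + 1) n, ((n.choose p : ℝ))⁻¹ *
      ∑ T ∈ (Finset.univ : Finset (Fin n)).powersetCard p, (p : ℝ)⁻¹ *
        ∑ j ∈ T, Real.log (m (insert j Tᶜ) / m Tᶜ) =
    ((n.choose P : ℝ))⁻¹ *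
      ∑ T ∈ (Finset.univ : Finset (Fin n)).powersetCard P, Real.log (m Tᶜ) :=
  stmt5_general n m hpos hempty P hP2
end

section
/- Let Z be the (n! × n) matrix with (t,i) entry equal to log p(y^{(t)}_i | y^{(t)}_{1:i−1}) where the t-th row corresponds to the t-th permutation of y_{1:n}, for an exchangeable positive joint probability p. Then for each column index i, the column average (1/n!) Σ_t (Z)_{ti} equals S_CV(y_{1:n}; n−i+1) = (1/C(n,i−1)) Σ over (i−1)-element training sets A of (1/(n−i+1)) Σ_{j∉A} log( p(y_{A∪{j}})/p(y_A) ). -/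
/-!
The `i`-th prequential term of an ordering `σ` depends only on the pair
`(σ '' {0, …, i - 1}, σ i)`, i.e. on `σ • (T, i)` for the natural action of the permutation
group on (training set, test point) pairs. This action is transitive on the pairs with a training
set of size `i` and a test point outside it, so the average over all `n!` permutations equals the
average over that orbit, which has `C(n, i) · (n - i)` elements.
-/

open Finset
open scoped Pointwise

namespace MulAction

variable {G X : Type*} [Group G] [Fintype G] [MulAction G X] [DecidableEq X]

theorem card_filter_smul_eq_smul (x y : X) (τ : G) :
    #{σ : G | σ • x = τ • y} = #{σ : G | σ • x = y} :=
  card_equiv (Equiv.mulLeft τ⁻¹) fun σ => by simp [mul_smul, inv_smul_eq_iff]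

variable {x : X} {S : Finset X}

theorem sum_smul_eq_card_stabilizer_nsmul_sum {M : Type*} [AddCommMonoid M]
    (hS : ∀ y, y ∈ S ↔ ∃ σ : G, σ • x = y) (F : X → M) :
    ∑ σ : G, F (σ • x) = #{σ : G | σ • x = x} • ∑ y ∈ S, F y := by
  rw [← sum_fiberwise_of_maps_to (t := S) (fun σ _ => (hS _).2 ⟨σ, rfl⟩), smul_sum]
  refine sum_congr rfl fun y hy => ?_
  obtain ⟨τ, rfl⟩ := (hS y).1 hy
  rw [sum_congr rfl fun σ hσ => congrArg F (mem_filter.1 hσ).2, sum_const,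
    card_filter_smul_eq_smul]

theorem card_eq_card_stabilizer_mul_card (hS : ∀ y, y ∈ S ↔ ∃ σ : G, σ • x = y) :
    Fintype.card G = #{σ : G | σ • x = x} * #S := by
  simpa [card_univ] using sum_smul_eq_card_stabilizer_nsmul_sum hS fun _ => (1 : ℕ)

theorem average_smul_eq_average_orbit {K : Type*} [Field K] [CharZero K]
    (hS : ∀ y, y ∈ S ↔ ∃ σ : G, σ • x = y) (F : X → K) :
    (Fintype.card G : K)⁻¹ * ∑ σ : G, F (σ • x) = (#S : K)⁻¹ * ∑ y ∈ S, F y := by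
  have hstab : (#{σ : G | σ • x = x} : K) ≠ 0 := by
    exact_mod_cast (card_pos.2 ⟨1, by simp⟩).ne'
  rw [sum_smul_eq_card_stabilizer_nsmul_sum hS, card_eq_card_stabilizer_mul_card hS, nsmul_eq_mul,
    Nat.cast_mul, mul_inv, mul_assoc, mul_left_comm, inv_mul_cancel_left₀ hstab]

end MulAction

namespace Equiv.Perm

variable {α : Type*} [DecidableEq α]

theorem smul_finset_prod (σ : Perm α) (p : Finset α × α) : σ • p = (p.1.image σ, σ p.2) :=
  rfl

theorem exists_image_eq_and_apply_eq [Finite α] {A B : Finset α} {a b : α} (hAB : #A = #B)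
    (ha : a ∉ A) (hb : b ∉ B) : ∃ τ : Perm α, A.image τ = B ∧ τ a = b := by
  set τ₀ : Perm α := (equivOfCardEq hAB).extendSubtype
  have hτ₀A : A.image τ₀ = B := by
    refine eq_of_subset_of_card_le (image_subset_iff.2 fun x hx => ?_) ?_
    · exact (equivOfCardEq hAB).extendSubtype_mem x hx
    · rw [card_image_of_injective _ τ₀.injective, hAB]
  have hτ₀a : τ₀ a ∉ B := (equivOfCardEq hAB).extendSubtype_not_mem a ha
  refine ⟨swap (τ₀ a) b * τ₀, ?_, by simp⟩
  rw [coe_mul, ← image_image, hτ₀A]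
  refine (image_congr fun y hy => ?_).trans image_id
  exact swap_apply_of_ne_of_ne (ne_of_mem_of_not_mem hy hτ₀a) (ne_of_mem_of_not_mem hy hb)

end Equiv.Perm

section TrainTestPairs

variable {α : Type*} [Fintype α] [DecidableEq α]

variable (α) in
def trainTestPairs (k : ℕ) : Finset (Finset α × α) := {p | #p.1 = k ∧ p.2 ∉ p.1}

variable {k : ℕ}

theorem mem_trainTestPairs {p : Finset α × α} :
    p ∈ trainTestPairs α k ↔ #p.1 = k ∧ p.2 ∉ p.1 := by
  simp [trainTestPairs]

theorem sum_trainTestPairs {M : Type*} [AddCommMonoid M] (F : Finset α × α → M) :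
    ∑ p ∈ trainTestPairs α k, F p = ∑ A ∈ powersetCard k univ, ∑ j ∈ Aᶜ, F (A, j) :=
  sum_finset_product _ _ _ fun p => by simp [mem_trainTestPairs]

theorem card_trainTestPairs :
    #(trainTestPairs α k) = (Fintype.card α).choose k * (Fintype.card α - k) := by
  rw [card_eq_sum_ones, sum_trainTestPairs]
  simp_rw [← card_eq_sum_ones]
  rw [sum_congr rfl fun A hA => by rw [card_compl, (mem_powersetCard.1 hA).2], sum_const,
    card_powersetCard, card_univ, smul_eq_mul]

theorem mem_trainTestPairs_iff_exists_smul {T : Finset α} {i : α} (hi : i ∉ T)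
    (p : Finset α × α) :
    p ∈ trainTestPairs α #T ↔ ∃ σ : Equiv.Perm α, σ • (T, i) = p := by
  obtain ⟨A, j⟩ := p
  simp only [mem_trainTestPairs, Equiv.Perm.smul_finset_prod, Prod.ext_iff]
  constructor
  · rintro ⟨hcard, hp⟩
    exact Equiv.Perm.exists_image_eq_and_apply_eq hcard.symm hi hp
  · rintro ⟨σ, rfl, rfl⟩
    exact ⟨card_image_of_injective _ σ.injective, by simpa using hi⟩

end TrainTestPairs

theorem stmt8_general (n : ℕ) (m : Finset (Fin n) → ℝ) (i : Fin n) :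
    ((n.factorial : ℝ))⁻¹ *
      ∑ σ : Equiv.Perm (Fin n),
        Real.log (m (insert (σ i) ((Finset.univ.filter (· < i)).image σ)) /
          m ((Finset.univ.filter (· < i)).image σ)) =
    ((n.choose i.val : ℝ))⁻¹ *
      ∑ A ∈ (Finset.univ : Finset (Fin n)).powersetCard i.val,
        ((n - i.val : ℕ) : ℝ)⁻¹ *
          ∑ j ∈ Aᶜ, Real.log (m (insert j A) / m A) := by
  set T : Finset (Fin n) := univ.filter (· < i)
  have hT : #T = i.val := by
    rw [show T = Iio i by ext; simp [T], Fin.card_Iio]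
  have hiT : i ∉ T := by simp [T]
  have hOrbit := MulAction.average_smul_eq_average_orbit (G := Equiv.Perm (Fin n)) (K := ℝ)
    (mem_trainTestPairs_iff_exists_smul hiT) fun p => Real.log (m (insert p.2 p.1) / m p.1)
  simp only [Equiv.Perm.smul_finset_prod] at hOrbit
  rw [Fintype.card_perm, Fintype.card_fin, card_trainTestPairs, sum_trainTestPairs, hT,
    Fintype.card_fin] at hOrbit
  rw [hOrbit, Nat.cast_mul, mul_inv, mul_assoc, mul_sum]

/-- Key step of Proposition 2: for an exchangeable positive joint probability (represented
by its marginal `m` on unordered subsets of indices), averaging the `i`-th prequential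
log conditional over all `n!` orderings equals the leave-`(n−i)`-out cross-validation
score over all training sets of size `i` (here `i` is zero-based, matching the paper's
`i−1` training points). -/
theorem stmt8 (n : ℕ) (m : Finset (Fin n) → ℝ) (hpos : ∀ S, 0 < m S) (i : Fin n) :
    ((n.factorial : ℝ))⁻¹ *
      ∑ σ : Equiv.Perm (Fin n),
        Real.log (m (insert (σ i) ((Finset.univ.filter (· < i)).image σ)) /
          m ((Finset.univ.filter (· < i)).image σ)) =
    ((n.choose i.val : ℝ))⁻¹ *
      ∑ A ∈ (Finset.univ : Finset (Fin n)).powersetCard i.val,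
        ((n - i.val : ℕ) : ℝ)⁻¹ *
          ∑ j ∈ Aᶜ, Real.log (m (insert j A) / m A) :=
  stmt8_general n m i
end

section
/- Let m : Finset(Fin n) → ℝ_{>0} be any positive function on subsets. Then Σ_{p=1}^n (1/C(n,p)) Σ_{|T|=p} (1/p) Σ_{j∈T} [log m((T∖{j})^c ∪ {j}) − log m(T^c)] = log m(univ) − log m(∅). -/
open Finset

/-!
Let `a k` be the average of `log m` over the `k`-subsets. Double counting the pairs `(S, j)`
with `|S| = k` and `j ∉ S` through `U = insert j S`, together with
`C(n, k) (n - k) = C(n, k + 1) (k + 1)`, shows that the leave-`p`-out score is the increment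
`a (n - p + 1) - a (n - p)`. Summing over `p` telescopes to `a n - a 0 = log m univ - log m ∅`.
-/

theorem sum_Icc_sub_reflect {M : Type*} [AddCommGroup M] (a : ℕ → M) (n : ℕ) :
    ∑ p ∈ Icc 1 n, (a (n - p + 1) - a (n - p)) = a n - a 0 := by
  rw [← Ico_add_one_right_eq_Icc, sum_Ico_eq_sum_range, add_tsub_cancel_right,
    ← sum_range_sub, ← sum_range_reflect]
  refine sum_congr rfl fun k hk ↦ ?_
  rw [mem_range] at hk
  congr 2 <;> omega

section

variable {α : Type*} [Fintype α]

noncomputable def cardAverage (f : Finset α → ℝ) (k : ℕ) : ℝ :=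
  ((Fintype.card α).choose k : ℝ)⁻¹ * ∑ S ∈ powersetCard k univ, f S

@[simp]
theorem cardAverage_zero (f : Finset α → ℝ) : cardAverage f 0 = f ∅ := by
  simp [cardAverage]

@[simp]
theorem cardAverage_card (f : Finset α → ℝ) : cardAverage f (Fintype.card α) = f univ := by
  simp [cardAverage, ← card_univ]

variable [DecidableEq α]

theorem sum_powersetCard_compl {M : Type*} [AddCommMonoid M] {p : ℕ} (hp : p ≤ Fintype.card α)
    (f : Finset α → M) :
    ∑ T ∈ powersetCard p univ, f Tᶜ = ∑ S ∈ powersetCard (Fintype.card α - p) univ, f S := by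
  refine sum_nbij' compl compl (fun T hT ↦ ?_) (fun S hS ↦ ?_) (fun T _ ↦ compl_compl T)
    (fun S _ ↦ compl_compl S) (fun _ _ ↦ rfl)
  · simp_all [card_compl]
  · simp_all [card_compl, Nat.sub_sub_self hp]

theorem sum_powersetCard_sum_compl_insert {M : Type*} [AddCommMonoid M] (k : ℕ)
    (f : Finset α → M) :
    ∑ S ∈ powersetCard k univ, ∑ j ∈ Sᶜ, f (insert j S) =
      (k + 1) • ∑ U ∈ powersetCard (k + 1) univ, f U := by
  have hU : ∀ U ∈ powersetCard (k + 1) (univ : Finset α), ∑ _j ∈ U, f U = (k + 1) • f U :=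
    fun U hU ↦ by rw [sum_const, mem_powersetCard_univ.1 hU]
  rw [smul_sum, ← sum_congr rfl hU, sum_sigma', sum_sigma']
  refine sum_nbij' (fun x ↦ ⟨insert x.2 x.1, x.2⟩) (fun y ↦ ⟨y.1.erase y.2, y.2⟩)
    ?_ ?_ ?_ ?_ (fun _ _ ↦ rfl)
  · rintro ⟨S, j⟩ h
    simp_all [card_insert_of_notMem]
  · rintro ⟨U, j⟩ h
    simp_all [card_erase_of_mem]
  · rintro ⟨S, j⟩ h
    simp_all
  · rintro ⟨U, j⟩ h
    simp_all

theorem cardAverage_succ_sub (f : Finset α → ℝ) {k : ℕ} (hk : k < Fintype.card α) :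
    cardAverage f (k + 1) - cardAverage f k =
      (((Fintype.card α).choose k * (Fintype.card α - k) : ℕ) : ℝ)⁻¹ *
        ∑ S ∈ powersetCard k univ, ∑ j ∈ Sᶜ, (f (insert j S) - f S) := by
  have hcompl : ∀ S ∈ powersetCard k (univ : Finset α),
      ∑ j ∈ Sᶜ, (f (insert j S) - f S) = ∑ j ∈ Sᶜ, f (insert j S) - (Fintype.card α - k) • f S :=
    fun S hS ↦ by rw [sum_sub_distrib, sum_const, card_compl, mem_powersetCard_univ.1 hS]
  have hchoose : ((Fintype.card α).choose (k + 1) : ℝ) * (k + 1) =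
      (Fintype.card α).choose k * (Fintype.card α - k : ℕ) :=
    mod_cast Nat.choose_succ_right_eq (Fintype.card α) k
  have hpos : (0 : ℝ) < (Fintype.card α).choose (k + 1) := mod_cast Nat.choose_pos hk
  have hpos' : (0 : ℝ) < (Fintype.card α).choose k := mod_cast Nat.choose_pos hk.le
  have hgap : (0 : ℝ) < (Fintype.card α - k : ℕ) := mod_cast Nat.sub_pos_of_lt hk
  rw [sum_congr rfl hcompl, sum_sub_distrib, sum_powersetCard_sum_compl_insert, ← smul_sum,
    cardAverage, cardAverage]
  simp only [nsmul_eq_mul, Nat.cast_mul, Nat.cast_succ]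
  field_simp
  linear_combination -(∑ U ∈ powersetCard (k + 1) univ, f U) * hchoose

/-- With `f = log m`, `f (insert j Tᶜ) - f Tᶜ` is the conditional log score of the held-out
point `j` given the training set `Tᶜ`, and `leavePOutScore f p` is the leave-`p`-out
cross-validation score. -/
noncomputable def leavePOutScore (f : Finset α → ℝ) (p : ℕ) : ℝ :=
  ((Fintype.card α).choose p : ℝ)⁻¹ *
    ∑ T ∈ powersetCard p univ, (p : ℝ)⁻¹ * ∑ j ∈ T, (f (insert j Tᶜ) - f Tᶜ)

theorem leavePOutScore_eq_cardAverage_sub (f : Finset α → ℝ) {p : ℕ}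
    (hp : p ∈ Icc 1 (Fintype.card α)) :
    leavePOutScore f p =
      cardAverage f (Fintype.card α - p + 1) - cardAverage f (Fintype.card α - p) := by
  obtain ⟨hp₁, hpN⟩ := mem_Icc.1 hp
  rw [cardAverage_succ_sub f (by omega), Nat.sub_sub_self hpN, Nat.choose_symm hpN,
    ← sum_powersetCard_compl hpN (fun S ↦ ∑ j ∈ Sᶜ, (f (insert j S) - f S)), leavePOutScore]
  simp only [compl_compl, Nat.cast_mul, mul_inv, mul_sum, mul_assoc]

theorem sum_leavePOutScore (f : Finset α → ℝ) :
    ∑ p ∈ Icc 1 (Fintype.card α), leavePOutScore f p = f univ - f ∅ := by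
  rw [sum_congr rfl fun p hp ↦ leavePOutScore_eq_cardAverage_sub f hp, sum_Icc_sub_reflect,
    cardAverage_card, cardAverage_zero]

theorem compl_sdiff_singleton_union_singleton (T : Finset α) (j : α) :
    (T \ {j})ᶜ ∪ {j} = insert j Tᶜ := by
  ext x
  simp only [mem_union, mem_compl, mem_sdiff, mem_singleton, mem_insert]
  tauto

end

theorem stmt10_general (n : ℕ) (m : Finset (Fin n) → ℝ) :
    ∑ p ∈ Finset.Icc 1 n, ((n.choose p : ℝ))⁻¹ *
      ∑ T ∈ (Finset.univ : Finset (Fin n)).powersetCard p, (p : ℝ)⁻¹ *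
        ∑ j ∈ T, (Real.log (m ((T \ {j})ᶜ ∪ {j})) - Real.log (m Tᶜ)) =
    Real.log (m (Finset.univ : Finset (Fin n))) - Real.log (m ∅) := by
  simp_rw [compl_sdiff_singleton_union_singleton]
  simpa only [leavePOutScore, Fintype.card_fin] using sum_leavePOutScore fun S ↦ Real.log (m S)

/-- Purely combinatorial form of Proposition 2 of Fong & Holmes: for any positive
function `m` on subsets of `{0,…,n−1}`, summing the leave-`p`-out cross-validation
scores over all `p` recovers `log m(univ) − log m(∅)`. -/
theorem stmt10 (n : ℕ) (m : Finset (Fin n) → ℝ) (hpos : ∀ S, 0 < m S) :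
    ∑ p ∈ Finset.Icc 1 n, ((n.choose p : ℝ))⁻¹ *
      ∑ T ∈ (Finset.univ : Finset (Fin n)).powersetCard p, (p : ℝ)⁻¹ *
        ∑ j ∈ T, (Real.log (m ((T \ {j})ᶜ ∪ {j})) - Real.log (m Tᶜ)) =
    Real.log (m (Finset.univ : Finset (Fin n))) - Real.log (m ∅) :=
  stmt10_general n m
end

section
/- In the two-point parameter setting of Proposition 1, suppose g(l) = exp(−λl) satisfies the coherence equation (g(l0)p + g(l1)(1−p))·(g(h0)p1 + g(h1)(1−p1)) = g(l0+h0)p + g(l1+h1)(1−p) for all p ∈ [0,1] and all l0,l1,h0,h1 ≥ 0, where p1 = exp(−w l0)p/(exp(−w l0)p + exp(−w l1)(1−p)) with w > 0. Then λ = 0 or λ = w. -/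
/-- Algebraic core of Proposition 1: if `g(l) = exp(−λ l)` satisfies the two-point
coherence equation with general Bayesian posterior weight
`p₁ = exp(−w l₀) p / (exp(−w l₀) p + exp(−w l₁)(1−p))`, then `λ = 0` or `λ = w`. -/
theorem stmt14 (w : ℝ) (hw : 0 < w) (lam : ℝ) (hlam : 0 ≤ lam)
    (hcoh : ∀ p : ℝ, 0 ≤ p → p ≤ 1 → ∀ l0 l1 h0 h1 : ℝ,
      0 ≤ l0 → 0 ≤ l1 → 0 ≤ h0 → 0 ≤ h1 →
      (Real.exp (-lam * l0) * p + Real.exp (-lam * l1) * (1 - p)) *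
        (Real.exp (-lam * h0) * (Real.exp (-w * l0) * p /
            (Real.exp (-w * l0) * p + Real.exp (-w * l1) * (1 - p))) +
         Real.exp (-lam * h1) * (1 - Real.exp (-w * l0) * p /
            (Real.exp (-w * l0) * p + Real.exp (-w * l1) * (1 - p)))) =
      Real.exp (-lam * (l0 + h0)) * p + Real.exp (-lam * (l1 + h1)) * (1 - p)) :
    lam = 0 ∨ lam = w := by
  have h := hcoh (1/2) (by norm_num) (by norm_num) 1 0 0 1 zero_le_one le_rfl le_rfl zero_le_one
  simp only [mul_zero, mul_one, Real.exp_zero, zero_add, add_zero] at h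
  have hB : (0:ℝ) < Real.exp (-w) := Real.exp_pos _
  have hA : (0:ℝ) < Real.exp (-lam) := Real.exp_pos _
  have hd : Real.exp (-w) * (1/2:ℝ) + 1 * (1 - 1/2) ≠ 0 := by positivity
  field_simp at h
  have hfac : (Real.exp (-lam) - 1) * (Real.exp (-lam) - Real.exp (-w)) = 0 := by nlinarith [h]
  rcases mul_eq_zero.1 hfac with h1 | h2
  · left
    have : Real.exp (-lam) = Real.exp 0 := by rw [Real.exp_zero]; linarith
    have := Real.exp_injective this
    linarith
  · right
    have : Real.exp (-lam) = Real.exp (-w) := by linarith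
    have := Real.exp_injective this
    linarith
end

section
/- Let w > 0 and consider the general Bayesian update ψ(l, π)(dθ) ∝ exp(−w l(θ)) π(dθ) on a measurable space Θ with prior probability measure π, where l : Θ → [0,∞) is a bounded measurable loss. Then the update is coherent: ψ(l_2, ψ(l_1, π)) = ψ(l_1 + l_2, π) for all bounded measurable losses l_1, l_2. -/
open MeasureTheory ENNReal

/-- The general Bayesian (Gibbs) update: `ψ(l, π)(dθ) ∝ exp(−w l(θ)) π(dθ)`,
normalized to a probability measure. -/
noncomputable def gibbsUpdate {Θ : Type*} [MeasurableSpace Θ]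
    (w : ℝ) (l : Θ → ℝ) (π : Measure Θ) : Measure Θ :=
  ((π.withDensity fun θ => ENNReal.ofReal (Real.exp (-w * l θ))) Set.univ)⁻¹ •
    π.withDensity fun θ => ENNReal.ofReal (Real.exp (-w * l θ))

/-- Coherence of the general Bayesian update (Bissiri, Holmes & Walker): sequentially
updating the prior `π` with the bounded measurable losses `l₁` then `l₂` gives the same
posterior as updating once with the additive loss `l₁ + l₂`. -/
theorem stmt16 {Θ : Type*} [MeasurableSpace Θ] (π : Measure Θ) [IsProbabilityMeasure π]
    (w : ℝ) (hw : 0 < w) (l₁ l₂ : Θ → ℝ)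
    (h₁meas : Measurable l₁) (h₂meas : Measurable l₂)
    (h₁nonneg : ∀ θ, 0 ≤ l₁ θ) (h₂nonneg : ∀ θ, 0 ≤ l₂ θ)
    (h₁bdd : ∃ C, ∀ θ, l₁ θ ≤ C) (h₂bdd : ∃ C, ∀ θ, l₂ θ ≤ C) :
    gibbsUpdate w l₂ (gibbsUpdate w l₁ π) = gibbsUpdate w (l₁ + l₂) π := by
  set f₁ : Θ → ℝ≥0∞ := fun θ => ENNReal.ofReal (Real.exp (-w * l₁ θ)) with hf₁
  set f₂ : Θ → ℝ≥0∞ := fun θ => ENNReal.ofReal (Real.exp (-w * l₂ θ)) with hf₂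
  have hf₁m : Measurable f₁ :=
    ENNReal.measurable_ofReal.comp (Real.measurable_exp.comp (h₁meas.const_mul _))
  have hf₂m : Measurable f₂ :=
    ENNReal.measurable_ofReal.comp (Real.measurable_exp.comp (h₂meas.const_mul _))
  set c₁ : ℝ≥0∞ := (π.withDensity f₁) Set.univ with hc₁
  -- c₁ is finite and nonzero
  have hc₁eq : c₁ = ∫⁻ θ, f₁ θ ∂π := by
    rw [hc₁, withDensity_apply _ MeasurableSet.univ, Measure.restrict_univ]
  have hc₁top : c₁ ≠ ⊤ := by
    rw [hc₁eq]
    have hle : ∀ θ, f₁ θ ≤ 1 := by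
      intro θ
      simp only [hf₁]
      rw [← ENNReal.ofReal_one]
      exact ENNReal.ofReal_le_ofReal (Real.exp_le_one_iff.2 (by nlinarith [h₁nonneg θ]))
    have : ∫⁻ θ, f₁ θ ∂π ≤ 1 := by
      calc ∫⁻ θ, f₁ θ ∂π ≤ ∫⁻ _, 1 ∂π := lintegral_mono hle
        _ = 1 := by simp
    exact ne_top_of_le_ne_top one_ne_top this
  have hc₁0 : c₁ ≠ 0 := by
    obtain ⟨C, hC⟩ := h₁bdd
    rw [hc₁eq]
    have hge : ∀ θ, ENNReal.ofReal (Real.exp (-w * C)) ≤ f₁ θ := by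
      intro θ
      exact ENNReal.ofReal_le_ofReal (Real.exp_le_exp.2 (by nlinarith [hC θ]))
    have : (ENNReal.ofReal (Real.exp (-w * C)) : ℝ≥0∞) ≤ ∫⁻ θ, f₁ θ ∂π := by
      calc (ENNReal.ofReal (Real.exp (-w * C)) : ℝ≥0∞)
          = ∫⁻ _, ENNReal.ofReal (Real.exp (-w * C)) ∂π := by simp
        _ ≤ ∫⁻ θ, f₁ θ ∂π := lintegral_mono hge
    intro h0
    rw [h0] at this
    simp only [nonpos_iff_eq_zero, ENNReal.ofReal_eq_zero] at this
    exact absurd this (not_le.2 (Real.exp_pos _))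
  -- key rewriting
  have hf12 : (fun θ => ENNReal.ofReal (Real.exp (-w * (l₁ + l₂) θ))) = f₁ * f₂ := by
    funext θ
    simp only [Pi.add_apply, Pi.mul_apply, hf₁, hf₂]
    rw [← ENNReal.ofReal_mul (Real.exp_pos _).le, ← Real.exp_add]
    ring_nf
  have hwd : ((gibbsUpdate w l₁ π).withDensity f₂)
      = c₁⁻¹ • π.withDensity (f₁ * f₂) := by
    rw [gibbsUpdate, ← hf₁, ← hc₁, withDensity_smul_measure,
      withDensity_mul π hf₁m hf₂m]
  have hmass : ((gibbsUpdate w l₁ π).withDensity f₂) Set.univ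
      = c₁⁻¹ * (π.withDensity (f₁ * f₂)) Set.univ := by
    rw [hwd]; rfl
  have hL : gibbsUpdate w l₂ (gibbsUpdate w l₁ π)
      = (((gibbsUpdate w l₁ π).withDensity f₂) Set.univ)⁻¹ •
        ((gibbsUpdate w l₁ π).withDensity f₂) := rfl
  have hR : gibbsUpdate w (l₁ + l₂) π
      = ((π.withDensity (f₁ * f₂)) Set.univ)⁻¹ • π.withDensity (f₁ * f₂) := by
    rw [gibbsUpdate, hf12]
  rw [hL, hR, hwd]
  simp only [Measure.smul_apply, smul_eq_mul]
  rw [smul_smul, ENNReal.mul_inv (Or.inl (ENNReal.inv_ne_zero.2 hc₁top))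
    (Or.inl (ENNReal.inv_ne_top.2 hc₁0)), inv_inv]
  congr 1
  rw [mul_comm c₁, mul_assoc, ENNReal.mul_inv_cancel hc₁0 hc₁top, mul_one]
end
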